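/- Let a, b be odd positive integers, 0 < q < 1 real, x ≥ 0, n ≥ 0. Then [2]_{q^b} Σ_{i=0}^{n} C(n,i) [a]_q^{n-i} [b]_q^i E_{n-i,q^a}(b x) S*_{n,i,q^b}(a) = [2]_{q^a} Σ_{i=0}^{n} C(n,i) [b]_q^{n-i} [a]_q^i E_{n-i,q^b}(a x) S*_{n,i,q^a}(b). -/

import Mathlib

/-! Writing `E_{n-i,q^a}(b x)` and `S*_{n,i,q^b}(a)` out as sums and using
`[a]_q [z]_{q^a} = [a z]_q` and `[u + v]_q = [v]_q + q^v [u]_q`, the binomial theorem collapses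
the left-hand side to `[2]_{q^a} [2]_{q^b} Σ_m Σ_{j<a} (-1)^k q^k [k + a b x]_q^n` with
`k = a m + b j`; oddness of `a` and `b` makes the sign `(-1)^(m+j)` equal to `(-1)^k`.
Splitting `m = b s + t` with `t < b` turns `k` into `a b s + a t + b j`, which is symmetric
in `a` and `b`. -/

open Finset

/-- q-analogue [z]_q = (1 - q^z)/(1 - q) (real rpow). -/
noncomputable def qn (q z : ℝ) : ℝ := (1 - q ^ z) / (1 - q)

/-- q-Euler polynomial E_{n,q}(x) = [2]_q Σ_{m} (-1)^m q^m [m+x]_q^n. -/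
noncomputable def qE (n : ℕ) (q x : ℝ) : ℝ :=
  (1 + q) * ∑' m : ℕ, (-1 : ℝ) ^ m * q ^ m * (qn q ((m : ℝ) + x)) ^ n

/-- Alternating q-power sum S*_{n,i,q}(a). -/
noncomputable def qS (n i a : ℕ) (q : ℝ) : ℝ :=
  ∑ j ∈ Finset.range a, (-1 : ℝ) ^ j * q ^ ((n + 1 - i) * j) * (qn q (j : ℝ)) ^ i

lemma qn_add {q : ℝ} (hq0 : 0 < q) (u v : ℝ) : qn q (u + v) = qn q v + q ^ v * qn q u := by
  unfold qn
  rw [Real.rpow_add hq0]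
  ring

lemma qn_mul_qn_pow {q : ℝ} (hq0 : 0 < q) (hq1 : q ≠ 1) {a : ℕ} (ha : a ≠ 0) (z : ℝ) :
    qn q a * qn (q ^ a) z = qn q (a * z) := by
  have h1 : 1 - q ≠ 0 := sub_ne_zero.2 hq1.symm
  have h2 : 1 - q ^ a ≠ 0 :=
    sub_ne_zero.2 (Ne.symm ((pow_eq_one_iff_of_nonneg hq0.le ha).not.2 hq1))
  have hpow : (q ^ a) ^ z = q ^ (a * z) := by rw [← Real.rpow_natCast, ← Real.rpow_mul hq0.le]
  rw [qn, qn, qn, hpow, Real.rpow_natCast]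
  field_simp

lemma abs_qn_add_le {q : ℝ} (hq0 : 0 < q) (hq1 : q < 1) (y : ℝ) {u : ℝ} (hu : 0 ≤ u) :
    |qn q (u + y)| ≤ (1 + q ^ y) / (1 - q) := by
  have hle : q ^ (u + y) ≤ q ^ y :=
    Real.rpow_le_rpow_of_exponent_ge hq0 hq1.le (le_add_of_nonneg_left hu)
  have hpos : 0 < q ^ (u + y) := Real.rpow_pos_of_pos hq0 _
  rw [qn, abs_div, abs_of_pos (sub_pos.2 hq1)]
  gcongr
  exact (abs_sub _ _).trans (by rw [abs_one, abs_of_pos hpos]; linarith)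

noncomputable def qEulerTerm (q y : ℝ) (n m : ℕ) : ℝ := (-1) ^ m * q ^ m * qn q (m + y) ^ n

lemma summable_qEulerTerm {q : ℝ} (hq0 : 0 < q) (hq1 : q < 1) (y : ℝ) (n : ℕ) :
    Summable (qEulerTerm q y n) := by
  refine Summable.of_norm_bounded
    ((summable_geometric_of_lt_one hq0.le hq1).mul_left (((1 + q ^ y) / (1 - q)) ^ n)) fun m => ?_
  rw [qEulerTerm, norm_mul, norm_mul, norm_pow, norm_pow, norm_pow, norm_neg, norm_one, one_pow,
    one_mul, Real.norm_of_nonneg hq0.le, mul_comm]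
  gcongr
  exact abs_qn_add_le hq0 hq1 y m.cast_nonneg

lemma tsum_eq_tsum_sum_range_mul_add {E : Type*} [AddCommMonoid E] [TopologicalSpace E]
    [ContinuousAdd E] [T3Space E] {f : ℕ → E} (hf : Summable f) {b : ℕ} (hb : 0 < b) :
    ∑' m, f m = ∑' s, ∑ t ∈ range b, f (s * b + t) := by
  have : NeZero b := ⟨hb.ne'⟩
  have hsum : Summable fun p => f ((Nat.divModEquiv b).symm p) :=
    (Nat.divModEquiv b).symm.summable_iff.2 hf
  rw [← (Nat.divModEquiv b).symm.tsum_eq f, hsum.tsum_prod' fun _ => .of_finite]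
  refine tsum_congr fun s => ?_
  rw [tsum_fintype, ← Fin.sum_univ_eq_sum_range (fun t => f (s * b + t))]
  rfl

/-- Both sides sum `G` over the numbers `a * b * s + a * t + b * j` with `t < b`, `j < a`. -/
lemma tsum_sum_range_mul_add_mul_comm {E : Type*} [NormedAddCommGroup E] [CompleteSpace E]
    {G : ℕ → E} (hG : Summable G) {a b : ℕ} (ha : 0 < a) (hb : 0 < b) :
    ∑' m, ∑ j ∈ range a, G (a * m + b * j) =
      ∑' m, ∑ j ∈ range b, G (b * m + a * j) := by
  have key : ∀ {c d : ℕ}, 0 < c → 0 < d → ∑' m, ∑ j ∈ range c, G (c * m + d * j) =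
      ∑' s, ∑ t ∈ range d, ∑ j ∈ range c, G (c * d * s + c * t + d * j) := by
    intro c d hc hd
    have hsum : Summable fun m => ∑ j ∈ range c, G (c * m + d * j) :=
      summable_sum fun j _ => hG.comp_injective fun m m' h => by
        simpa [hc.ne'] using h
    rw [tsum_eq_tsum_sum_range_mul_add hsum hd]
    exact tsum_congr fun s => sum_congr rfl fun t _ => sum_congr rfl fun j _ => congrArg G (by ring)
  rw [key ha hb, key hb ha]
  exact tsum_congr fun s => sum_comm.trans <|
    sum_congr rfl fun j _ => sum_congr rfl fun t _ => congrArg G (by ring)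

lemma sum_choose_mul_qS_summand_mul_qEulerTerm {q : ℝ} (hq0 : 0 < q) (hq1 : q ≠ 1) {a b : ℕ}
    (hao : Odd a) (hbo : Odd b) (y : ℝ) (n m j : ℕ) :
    ∑ i ∈ range (n + 1), n.choose i * qn q a ^ (n - i) * qn q b ^ i *
        ((-1) ^ j * (q ^ b) ^ ((n + 1 - i) * j) * qn (q ^ b) j ^ i) *
        qEulerTerm (q ^ a) y (n - i) m =
      qEulerTerm q (a * y) n (a * m + b * j) := by
  have hA : qn q a * qn (q ^ a) (m + y) = qn q (a * (m + y)) :=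
    qn_mul_qn_pow hq0 hq1 hao.pos.ne' _
  have hB : qn q b * qn (q ^ b) j = qn q (b * j) := qn_mul_qn_pow hq0 hq1 hbo.pos.ne' _
  have hsign : (-1 : ℝ) ^ (a * m + b * j) = (-1) ^ m * (-1) ^ j := by
    rw [pow_add, pow_mul, pow_mul, hao.neg_one_pow, hbo.neg_one_pow]
  have hqn : qn q (b * j) + qn q (a * (m + y)) * (q ^ b) ^ j =
      qn q ((a * m + b * j : ℕ) + a * y) := by
    rw [← pow_mul, ← Real.rpow_natCast, Nat.cast_mul, mul_comm (qn q _), ← qn_add hq0]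
    push_cast
    ring_nf
  calc _ = ∑ i ∈ range (n + 1), (-1) ^ (a * m + b * j) * q ^ (a * m + b * j) *
          (qn q (b * j) ^ i * (qn q (a * (m + y)) * (q ^ b) ^ j) ^ (n - i) * n.choose i) := by
        refine sum_congr rfl fun i hi => ?_
        rw [qEulerTerm, ← hA, ← hB, hsign, show n + 1 - i = n - i + 1 by grind]
        ring
    _ = qEulerTerm q (a * y) n (a * m + b * j) := by
        rw [← mul_sum, ← add_pow, hqn, qEulerTerm]

lemma sum_choose_mul_qE_mul_qS {q : ℝ} (hq0 : 0 < q) (hq1 : q < 1) {a b : ℕ} (hao : Odd a)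
    (hbo : Odd b) (y : ℝ) (n : ℕ) :
    ∑ i ∈ range (n + 1), n.choose i * qn q a ^ (n - i) * qn q b ^ i *
        qE (n - i) (q ^ a) y * qS n i a (q ^ b) =
      (1 + q ^ a) * ∑' m, ∑ j ∈ range a, qEulerTerm q (a * y) n (a * m + b * j) := by
  have hqa0 : 0 < q ^ a := pow_pos hq0 a
  have hqa1 : q ^ a < 1 := pow_lt_one₀ hq0.le hq1 hao.pos.ne'
  set c : ℕ → ℝ := fun i => n.choose i * qn q a ^ (n - i) * qn q b ^ i * qS n i a (q ^ b)
  have hsummable (i : ℕ) : Summable fun m => c i * qEulerTerm (q ^ a) y (n - i) m :=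
    (summable_qEulerTerm hqa0 hqa1 y (n - i)).mul_left (c i)
  calc _ = (1 + q ^ a) * ∑' m, ∑ i ∈ range (n + 1), c i * qEulerTerm (q ^ a) y (n - i) m := by
        rw [Summable.tsum_finsetSum fun i _ => hsummable i, mul_sum]
        refine sum_congr rfl fun i _ => ?_
        rw [(summable_qEulerTerm hqa0 hqa1 y (n - i)).tsum_mul_left, qE]
        simp only [qEulerTerm, c]
        ring
    _ = _ := by
        congr 1
        refine tsum_congr fun m => ?_
        simp only [c, qS, mul_sum, sum_mul]
        rw [sum_comm]
        exact sum_congr rfl fun j _ =>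
          sum_choose_mul_qS_summand_mul_qEulerTerm hq0 hq1.ne hao hbo y n m j

theorem qEuler_symmetric_identity_general (q : ℝ) (hq0 : 0 < q) (hq1 : q < 1) (x : ℝ)
    (n a b : ℕ) (hao : Odd a) (hbo : Odd b) :
    (1 + q ^ b) * ∑ i ∈ Finset.range (n + 1),
        (n.choose i : ℝ) * (qn q (a : ℝ)) ^ (n - i) * (qn q (b : ℝ)) ^ i *
          qE (n - i) (q ^ a) ((b : ℝ) * x) * qS n i a (q ^ b) =
      (1 + q ^ a) * ∑ i ∈ Finset.range (n + 1),
        (n.choose i : ℝ) * (qn q (b : ℝ)) ^ (n - i) * (qn q (a : ℝ)) ^ i *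
          qE (n - i) (q ^ b) ((a : ℝ) * x) * qS n i b (q ^ a) := by
  rw [sum_choose_mul_qE_mul_qS hq0 hq1 hao hbo, sum_choose_mul_qE_mul_qS hq0 hq1 hbo hao,
    mul_left_comm (a : ℝ), tsum_sum_range_mul_add_mul_comm (summable_qEulerTerm hq0 hq1 _ n)
      hao.pos hbo.pos]
  ring

theorem qEuler_symmetric_identity (q : ℝ) (hq0 : 0 < q) (hq1 : q < 1) (x : ℝ) (hx : 0 ≤ x)
    (n a b : ℕ) (ha : 0 < a) (hb : 0 < b) (hao : Odd a) (hbo : Odd b) :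
    (1 + q ^ b) * ∑ i ∈ Finset.range (n + 1),
        (n.choose i : ℝ) * (qn q (a : ℝ)) ^ (n - i) * (qn q (b : ℝ)) ^ i *
          qE (n - i) (q ^ a) ((b : ℝ) * x) * qS n i a (q ^ b) =
      (1 + q ^ a) * ∑ i ∈ Finset.range (n + 1),
        (n.choose i : ℝ) * (qn q (b : ℝ)) ^ (n - i) * (qn q (a : ℝ)) ^ i *
          qE (n - i) (q ^ b) ((a : ℝ) * x) * qS n i b (q ^ a) :=
  qEuler_symmetric_identity_general q hq0 hq1 x n a b hao hbo
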